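/- Let $d, d^\Lambda$ be linear endomorphisms of a vector space $\Omega$ with $d^2 = 0$, $(d^\Lambda)^2 = 0$, and $d d^\Lambda + d^\Lambda d = 0$. Define $H_d = \ker d/\mathrm{im}\,d$, $H_{d+d^\Lambda} = (\ker d \cap \ker d^\Lambda)/\mathrm{im}(d d^\Lambda)$, and $H_{dd^\Lambda} = \ker(d d^\Lambda)/(\mathrm{im}\,d + \mathrm{im}\,d^\Lambda)$. If $H_d$ is infinite dimensional then $H_{d+d^\Lambda}$ or $H_{dd^\Lambda}$ is infinite dimensional. -/

import Mathlib

/-!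
Write `H_BC`, `H_d`, `H_A` for the three spaces. Inclusions of the underlying subspaces induce
`H_BC → H_d → H_A`, and this sequence is exact in the middle: if a `d`-closed `x` is `d u + dΛ v`,
then `dΛ v` is `d`- and `dΛ`-closed and represents the class of `x` in `H_d`. Hence `H_d` is
finite-dimensional as soon as `H_BC` and `H_A` are.
-/

open LinearMap Submodule

theorem isNoetherian_of_ker_le_range {R A M C : Type*} [Ring R] [AddCommGroup A] [Module R A]
    [AddCommGroup M] [Module R M] [AddCommGroup C] [Module R C]
    [IsNoetherian R A] [IsNoetherian R C] (f : A →ₗ[R] M) (g : M →ₗ[R] C)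
    (h : ker g ≤ range f) : IsNoetherian R M := by
  have : IsNoetherian R (M ⧸ ker g) := isNoetherian_of_linearEquiv g.quotKerEquivRange.symm
  have : IsNoetherian R (M ⧸ range f) :=
    isNoetherian_of_surjective (factor h) (range_eq_top.2 (factor_surjective h))
  exact (isNoetherian_iff_submodule_quotient (range f)).2 ⟨inferInstance, this⟩

namespace Submodule

variable {R M : Type*} [Ring R] [AddCommGroup M] [Module R M]

def subquotientMap {p p' q q' : Submodule R M} (hp : p ≤ p') (hq : q ≤ q') :
    (p ⧸ q.comap p.subtype) →ₗ[R] (p' ⧸ q'.comap p'.subtype) :=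
  mapQ _ _ (inclusion hp) fun _ hx => hq hx

@[simp]
theorem subquotientMap_mk {p p' q q' : Submodule R M} (hp : p ≤ p') (hq : q ≤ q') (x : p) :
    subquotientMap hp hq (Submodule.Quotient.mk x) = Submodule.Quotient.mk (inclusion hp x) :=
  rfl

end Submodule

section DoubleComplex

variable {R M : Type*} [Ring R] [AddCommGroup M] [Module R M] {d dΛ : M →ₗ[R] M}

theorem ker_le_ker_comp_of_anticomm (hanti : d ∘ₗ dΛ + dΛ ∘ₗ d = 0) :
    ker d ≤ ker (d ∘ₗ dΛ) := by
  intro x hx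
  have := congr($hanti x)
  rw [mem_ker] at hx ⊢
  simpa [hx] using this

theorem ker_subquotientMap_le_range (hd : d ∘ₗ d = 0) (hdΛ : dΛ ∘ₗ dΛ = 0)
    (hle : ker d ≤ ker (d ∘ₗ dΛ)) :
    ker (subquotientMap hle (le_sup_left : range d ≤ range d ⊔ range dΛ)) ≤
      range (subquotientMap (inf_le_left : ker d ⊓ ker dΛ ≤ ker d)
        (range_comp_le_range dΛ d)) := by
  intro q hq
  obtain ⟨x, rfl⟩ := Submodule.Quotient.mk_surjective _ q
  simp only [mem_ker, subquotientMap_mk, Quotient.mk_eq_zero, mem_comap, subtype_apply,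
    coe_inclusion, mem_sup, mem_range] at hq
  obtain ⟨_, ⟨u, rfl⟩, _, ⟨v, rfl⟩, huv⟩ := hq
  have hdu : d (d u) = 0 := congr($hd u)
  have hdv : d (dΛ v) = 0 := by
    simpa [← huv, hdu] using x.2
  have hdΛv : dΛ (dΛ v) = 0 := congr($hdΛ v)
  refine ⟨Submodule.Quotient.mk ⟨dΛ v, mem_inf.2 ⟨mem_ker.2 hdv, mem_ker.2 hdΛv⟩⟩, ?_⟩
  rw [subquotientMap_mk, Submodule.Quotient.eq]
  exact ⟨-u, by simp [← huv]⟩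

end DoubleComplex

theorem stmt_17 {𝕜 Ω : Type*} [Field 𝕜] [AddCommGroup Ω] [Module 𝕜 Ω]
    (d dΛ : Ω →ₗ[𝕜] Ω)
    (hd : d ∘ₗ d = 0) (hdΛ : dΛ ∘ₗ dΛ = 0) (hanti : d ∘ₗ dΛ + dΛ ∘ₗ d = 0)
    (hinf : ¬ FiniteDimensional 𝕜
      (↥(LinearMap.ker d) ⧸
        ((LinearMap.range d).comap (LinearMap.ker d).subtype))) :
    ¬ FiniteDimensional 𝕜
      (↥(LinearMap.ker d ⊓ LinearMap.ker dΛ) ⧸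
        ((LinearMap.range (d ∘ₗ dΛ)).comap (LinearMap.ker d ⊓ LinearMap.ker dΛ).subtype)) ∨
    ¬ FiniteDimensional 𝕜
      (↥(LinearMap.ker (d ∘ₗ dΛ)) ⧸
        ((LinearMap.range d ⊔ LinearMap.range dΛ).comap (LinearMap.ker (d ∘ₗ dΛ)).subtype)) := by
  rw [← not_and_or]
  rintro ⟨hBC, hA⟩
  exact hinf <| IsNoetherian.iff_fg.1 <| isNoetherian_of_ker_le_range _ _ <|
    ker_subquotientMap_le_range hd hdΛ (ker_le_ker_comp_of_anticomm hanti)
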